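/- arXiv:1801.06793 — 2 statements merged into one kernel-verified Lean document; each statement's English description precedes it below -/
import Mathlib

section
/- The record domain constructor is monotonic with respect to the subdomain relation: if D is a subdomain of D' (i.e., the universe of D is a subset of that of D', the ordering on D is the restriction of that on D', consistency in D coincides with consistency in D' restricted to D, lubs of consistent pairs in D agree with those in D', and both share the same bottom), then L ⊸ D is a subdomain of L ⊸ D'. -/
structure RecFn (L D : Type*) where
  f : L → Option D
  fin : {l | (f l).isSome}.Finite

inductive Rec (L D : Type*) where
  | bot : Rec L D
  | node : RecFn L D → Rec L D

def RecFn.shape {L D : Type*} (r : RecFn L D) : Set L := {l | (r.f l).isSome}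

def recLe {L D : Type*} (le : D → D → Prop) : Rec L D → Rec L D → Prop
  | .bot, _ => True
  | .node _, .bot => False
  | .node r, .node r' =>
      r.shape = r'.shape ∧ ∀ l d d', r.f l = some d → r'.f l = some d' → le d d'

/-- Consistency of `x` and `y` within a subset `A` of an ambient ordered universe. -/
def ConsistentIn {U : Type*} (le : U → U → Prop) (A : Set U) (x y : U) : Prop :=
  ∃ u ∈ A, le x u ∧ le y u

/-- `s` is the least upper bound of `x` and `y` within the subset `A`. -/
def IsLubIn {U : Type*} (le : U → U → Prop) (A : Set U) (x y s : U) : Prop :=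
  s ∈ A ∧ le x s ∧ le y s ∧ ∀ t ∈ A, le x t → le y t → le s t

/-- The subdomain relation `A ⋐ B`: the universe of `A` is a subset of that of `B`
(the ordering being the restriction of the ambient one), both share the bottom
element, consistency in `A` coincides with consistency in `B` restricted to `A`,
and lubs of consistent pairs in `A` agree with those in `B`. -/
def Subdomain {U : Type*} (le : U → U → Prop) (bot : U) (A B : Set U) : Prop :=
  A ⊆ B ∧ bot ∈ A ∧ bot ∈ B ∧ (∀ x ∈ A, le bot x) ∧ (∀ x ∈ B, le bot x) ∧
  (∀ x ∈ A, ∀ y ∈ A, (ConsistentIn le A x y ↔ ConsistentIn le B x y)) ∧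
  (∀ x ∈ A, ∀ y ∈ A, ∀ s, IsLubIn le A x y s → IsLubIn le B x y s)

/-- The record construction applied to a subset `A` of the value universe:
bottom together with all record functions whose values lie in `A`. -/
def RecSet {L D : Type*} (A : Set D) : Set (Rec L D) :=
  {x | x = Rec.bot ∨ ∃ r : RecFn L D, x = Rec.node r ∧ ∀ l d, r.f l = some d → d ∈ A}

/-!
Records are compared shape-wise and then label by label, so both consistency and lubs in
`L ⊸ D` can be computed pointwise. Two consistent records have the same shape, and choosing
at every label a common upper bound in `D` of their entries assembles a common upper bound
in `L ⊸ D`. If `s` is the lub in `L ⊸ D` of two records, then each entry of `s` is the lub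
in `D` of the corresponding entries, because overwriting that entry of `s` by any other upper
bound yields another upper bound of the two records. Lubs in `D` are lubs in `D'`, which
bounds `s` below every upper bound in `L ⊸ D'`.
-/

theorem ConsistentIn.mono {U : Type*} {le : U → U → Prop} {A B : Set U} {x y : U}
    (h : ConsistentIn le A x y) (hAB : A ⊆ B) : ConsistentIn le B x y :=
  let ⟨u, hu, hxu, hyu⟩ := h
  ⟨u, hAB hu, hxu, hyu⟩

namespace RecFn

variable {L D E : Type*}

theorem mem_shape {r : RecFn L D} {l : L} : l ∈ r.shape ↔ (r.f l).isSome := Iff.rfl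

theorem exists_eq_some_of_shape_eq {r r' : RecFn L D} (h : r.shape = r'.shape) {l : L}
    {d : D} (hd : r.f l = some d) : ∃ d', r'.f l = some d' :=
  Option.isSome_iff_exists.mp (mem_shape.mp (h ▸ mem_shape.mpr (by simp [hd])))

def mapIdx (r : RecFn L D) (g : L → D → E) : RecFn L E :=
  ⟨fun l => (r.f l).map (g l), by simpa using r.fin⟩

@[simp]
theorem shape_mapIdx (r : RecFn L D) (g : L → D → E) : (r.mapIdx g).shape = r.shape := by
  ext l
  simp [mem_shape, mapIdx]

theorem mapIdx_f_eq_some {r : RecFn L D} {g : L → D → E} {l : L} {e : E} :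
    (r.mapIdx g).f l = some e ↔ ∃ d, r.f l = some d ∧ g l d = e :=
  Option.map_eq_some_iff

def update [DecidableEq L] (r : RecFn L D) (l : L) (d : D) : RecFn L D :=
  ⟨Function.update r.f l (some d), (r.fin.union (Set.finite_singleton l)).subset fun l' h' => by
    by_cases hl : l' = l
    · exact Or.inr hl
    · exact Or.inl (by simpa [Function.update_of_ne hl] using h')⟩

variable [DecidableEq L]

@[simp]
theorem update_f_self (r : RecFn L D) (l : L) (d : D) : (r.update l d).f l = some d :=
  Function.update_self _ _ _

theorem update_f_of_ne (r : RecFn L D) {l l' : L} (h : l' ≠ l) (d : D) :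
    (r.update l d).f l' = r.f l' :=
  Function.update_of_ne h _ _

theorem shape_update {r : RecFn L D} {l : L} (hl : l ∈ r.shape) (d : D) :
    (r.update l d).shape = r.shape := by
  ext l'
  by_cases h : l' = l
  · subst h
    simpa [mem_shape] using hl.symm
  · simp [mem_shape, update_f_of_ne r h]

end RecFn

section RecSet

variable {L U : Type*} {le : U → U → Prop} {A B : Set U}

theorem bot_mem_recSet : (Rec.bot : Rec L U) ∈ RecSet A := Or.inl rfl

theorem node_mem_recSet {r : RecFn L U} :
    Rec.node r ∈ RecSet A ↔ ∀ l d, r.f l = some d → d ∈ A := by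
  simp [RecSet]

theorem recSet_subset (hAB : A ⊆ B) : RecSet (L := L) A ⊆ RecSet B := by
  rintro x (rfl | ⟨r, rfl, hr⟩)
  · exact bot_mem_recSet
  · exact node_mem_recSet.mpr fun l d hd => hAB (hr l d hd)

theorem RecFn.node_update_mem_recSet [DecidableEq L] {r : RecFn L U}
    (hr : Rec.node r ∈ RecSet A) (l : L) {u : U} (hu : u ∈ A) :
    Rec.node (r.update l u) ∈ RecSet A := by
  refine node_mem_recSet.mpr fun l' d hd => ?_
  by_cases h : l' = l
  · subst h
    simp_all
  · exact node_mem_recSet.mp hr l' d (by rwa [RecFn.update_f_of_ne r h] at hd)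

theorem recLe_refl (hrefl : ∀ a, le a a) (x : Rec L U) : recLe le x x := by
  cases x with
  | bot => trivial
  | node r =>
    refine ⟨rfl, fun l d d' hd hd' => ?_⟩
    cases hd.symm.trans hd'
    exact hrefl d

theorem recLe_trans (htrans : ∀ ⦃a b c⦄, le a b → le b c → le a c) {x y z : Rec L U} :
    recLe le x y → recLe le y z → recLe le x z := by
  match x, y, z with
  | .bot, _, _ => exact fun _ _ => trivial
  | .node _, .bot, _ => exact False.elim
  | .node _, .node _, .bot => exact fun _ => False.elim
  | .node r, .node r', .node r'' =>
    rintro ⟨hs, hle⟩ ⟨hs', hle'⟩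
    refine ⟨hs.trans hs', fun l d d'' hd hd'' => ?_⟩
    obtain ⟨d', hd'⟩ := RecFn.exists_eq_some_of_shape_eq hs hd
    exact htrans (hle l d d' hd hd') (hle' l d' d'' hd' hd'')

theorem recLe_node_mapIdx {r r' : RecFn L U} {g : L → U → U} (hshape : r'.shape = r.shape)
    (hg : ∀ l d d', r.f l = some d → r'.f l = some d' → le d' (g l d)) :
    recLe le (.node r') (.node (r.mapIdx g)) := by
  refine ⟨by simp [hshape], fun l d' e hd' he => ?_⟩
  obtain ⟨d, hd, rfl⟩ := RecFn.mapIdx_f_eq_some.mp he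
  exact hg l d d' hd hd'

theorem recLe_node_update [DecidableEq L] {r s : RecFn L U} {l : L} {u : U}
    (hrs : recLe le (.node r) (.node s)) (hl : l ∈ s.shape)
    (hu : ∀ d, r.f l = some d → le d u) :
    recLe le (.node r) (.node (s.update l u)) := by
  refine ⟨hrs.1.trans (RecFn.shape_update hl u).symm, fun l' d e hd he => ?_⟩
  by_cases h : l' = l
  · subst h
    cases (RecFn.update_f_self s l' u).symm.trans he
    exact hu d hd
  · exact hrs.2 l' d e hd (by rwa [RecFn.update_f_of_ne s h] at he)

theorem consistentIn_recSet_of_consistentIn (hrefl : ∀ a, le a a)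
    (hcons : ∀ x ∈ A, ∀ y ∈ A, ConsistentIn le B x y → ConsistentIn le A x y)
    {x y : Rec L U} (hx : x ∈ RecSet A) (hy : y ∈ RecSet A)
    (hxy : ConsistentIn (recLe le) (RecSet B) x y) :
    ConsistentIn (recLe le) (RecSet A) x y := by
  match x, y, hxy with
  | .bot, y, _ => exact ⟨y, hy, trivial, recLe_refl hrefl y⟩
  | x, .bot, _ => exact ⟨x, hx, recLe_refl hrefl x, trivial⟩
  | .node _, .node _, ⟨.bot, _, hru, _⟩ => exact hru.elim
  | .node r, .node r', ⟨.node u, hu, ⟨hru, hle⟩, ⟨hr'u, hle'⟩⟩ =>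
    have hbound : ∀ l d, ∃ v, r.f l = some d →
        v ∈ A ∧ le d v ∧ ∀ d', r'.f l = some d' → le d' v := by
      intro l d
      by_cases hd : r.f l = some d
      · obtain ⟨d', hd'⟩ := RecFn.exists_eq_some_of_shape_eq (hru.trans hr'u.symm) hd
        obtain ⟨du, hdu⟩ := RecFn.exists_eq_some_of_shape_eq hru hd
        obtain ⟨v, hvA, hdv, hd'v⟩ :=
          hcons d (node_mem_recSet.mp hx l d hd) d' (node_mem_recSet.mp hy l d' hd')
            ⟨du, node_mem_recSet.mp hu l du hdu, hle l d du hd hdu, hle' l d' du hd' hdu⟩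
        exact ⟨v, fun _ => ⟨hvA, hdv, fun e he => by cases hd'.symm.trans he; exact hd'v⟩⟩
      · exact ⟨d, fun h => absurd h hd⟩
    choose g hg using hbound
    refine ⟨.node (r.mapIdx g), node_mem_recSet.mpr fun l e he => ?_,
      recLe_node_mapIdx rfl fun l d d' hd hd' => ?_,
      recLe_node_mapIdx (hr'u.trans hru.symm) fun l d d' hd hd' => (hg l d hd).2.2 d' hd'⟩
    · obtain ⟨d, hd, rfl⟩ := RecFn.mapIdx_f_eq_some.mp he
      exact (hg l d hd).1
    · cases hd.symm.trans hd'
      exact (hg l d hd).2.1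

theorem isLubIn_apply_of_isLubIn_recSet [DecidableEq L] {r r' s : RecFn L U}
    (hs : IsLubIn (recLe le) (RecSet A) (.node r) (.node r') (.node s))
    {l : L} {d dx dy : U} (hd : s.f l = some d) (hdx : r.f l = some dx)
    (hdy : r'.f l = some dy) : IsLubIn le A dx dy d := by
  obtain ⟨hsA, hrs, hr's, hleast⟩ := hs
  refine ⟨node_mem_recSet.mp hsA l d hd, hrs.2 l dx d hdx hd, hr's.2 l dy d hdy hd,
    fun u hu hdxu hdyu => ?_⟩
  have hl : l ∈ s.shape := RecFn.mem_shape.mpr (by simp [hd])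
  have hupdate := hleast _ (RecFn.node_update_mem_recSet hsA l hu)
    (recLe_node_update hrs hl fun e he => by cases hdx.symm.trans he; exact hdxu)
    (recLe_node_update hr's hl fun e he => by cases hdy.symm.trans he; exact hdyu)
  exact hupdate.2 l d u hd (RecFn.update_f_self s l u)

theorem isLubIn_recSet_of_isLubIn (hrefl : ∀ a, le a a)
    (htrans : ∀ ⦃a b c⦄, le a b → le b c → le a c) (hAB : A ⊆ B)
    (hlub : ∀ x ∈ A, ∀ y ∈ A, ∀ s, IsLubIn le A x y s → IsLubIn le B x y s)
    {x y s : Rec L U} (hx : x ∈ RecSet A) (hy : y ∈ RecSet A)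
    (hs : IsLubIn (recLe le) (RecSet A) x y s) : IsLubIn (recLe le) (RecSet B) x y s := by
  classical
  refine ⟨recSet_subset hAB hs.1, hs.2.1, hs.2.2.1, fun t ht hxt hyt => ?_⟩
  match x, y, s, t, hs, hxt with
  | .bot, y, _, _, ⟨_, _, _, hleast⟩, _ =>
    exact recLe_trans htrans (hleast y hy trivial (recLe_refl hrefl y)) hyt
  | x, .bot, _, _, ⟨_, _, _, hleast⟩, hxt =>
    exact recLe_trans htrans (hleast x hx (recLe_refl hrefl x) trivial) hxt
  | .node _, .node _, .bot, _, ⟨_, hxs, _, _⟩, _ => exact hxs.elim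
  | .node _, .node _, _, .bot, _, hxt => exact hxt.elim
  | .node r, .node r', .node s, .node t, hs@⟨_, ⟨hrs, _⟩, ⟨hr's, _⟩, _⟩, hxt =>
    refine ⟨hrs.symm.trans hxt.1, fun l d e hd he => ?_⟩
    obtain ⟨dx, hdx⟩ := RecFn.exists_eq_some_of_shape_eq hrs.symm hd
    obtain ⟨dy, hdy⟩ := RecFn.exists_eq_some_of_shape_eq hr's.symm hd
    have hlubB : IsLubIn le B dx dy d :=
      hlub dx (node_mem_recSet.mp hx l dx hdx) dy (node_mem_recSet.mp hy l dy hdy) d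
        (isLubIn_apply_of_isLubIn_recSet hs hd hdx hdy)
    exact hlubB.2.2.2 e (node_mem_recSet.mp ht l e he) (hxt.2 l dx e hdx he)
      (hyt.2 l dy e hdy he)

end RecSet

/-- the record domain constructor is monotonic with respect to the
subdomain relation: if `D ⋐ D'` then `L ⊸ D ⋐ L ⊸ D'`. -/
theorem recSet_mono {L U : Type*} (le : U → U → Prop)
    (hrefl : Reflexive le) (htrans : Transitive le) (bot : U) (A B : Set U)
    (h : Subdomain le bot A B) :
    Subdomain (recLe le) Rec.bot (RecSet (L := L) A) (RecSet (L := L) B) := by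
  obtain ⟨hAB, -, -, -, -, hcons, hlub⟩ := h
  refine ⟨recSet_subset hAB, bot_mem_recSet, bot_mem_recSet, fun _ _ => trivial,
    fun _ _ => trivial, fun x hx y hy => ⟨fun hxy => hxy.mono (recSet_subset hAB), ?_⟩,
    fun x hx y hy _ => isLubIn_recSet_of_isLubIn hrefl htrans hAB hlub hx hy⟩
  exact consistentIn_recSet_of_consistentIn hrefl (fun x hx y hy => (hcons x hx y hy).mpr) hx hy
end

section
/- The record domain constructor preserves least upper bounds of chains of domains: if (D_i) is an increasing chain of domains under the subdomain relation with union D = ⋃_i D_i, then L ⊸ D equals the union ⋃_i (L ⊸ D_i). In particular, every record function over D with values in the union lies in some L ⊸ D_i, because its finitely many values all appear in a single D_i. -/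
namespace RecFn

variable {L D : Type*}

def values (r : RecFn L D) : Set D := {d | ∃ l, r.f l = some d}

theorem values_subset_iff {r : RecFn L D} {A : Set D} :
    r.values ⊆ A ↔ ∀ l d, r.f l = some d → d ∈ A := by
  simp only [values, Set.ofPred_subset, forall_exists_index]
  exact forall_comm

theorem values_finite (r : RecFn L D) : r.values.Finite :=
  (r.fin.image r.f).preimage (Option.some_injective D).injOn |>.subset
    fun d ⟨l, hl⟩ => ⟨l, by simp [hl], hl⟩

end RecFn

section RecSet

variable {L D : Type*}

theorem mem_recSet_iff {A : Set D} {x : Rec L D} :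
    x ∈ RecSet A ↔ x = .bot ∨ ∃ r : RecFn L D, x = .node r ∧ r.values ⊆ A := by
  simp only [RecSet, Set.mem_ofPred_eq, RecFn.values_subset_iff]

theorem recSet_mono_s4 : Monotone (RecSet (L := L) (D := D)) := by
  intro A B hAB x
  simp only [mem_recSet_iff]
  exact Or.imp_right fun ⟨r, hx, hr⟩ => ⟨r, hx, hr.trans hAB⟩

/-- A record function has finitely many values, so in a directed union they all lie in one
member. -/
theorem recSet_iUnion_of_directed {ι : Type*} [Nonempty ι] {A : ι → Set D}
    (hA : Directed (· ⊆ ·) A) : RecSet (L := L) (⋃ i, A i) = ⋃ i, RecSet (A i) := by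
  refine subset_antisymm (fun x hx => ?_)
    (Set.iUnion_subset fun i => recSet_mono_s4 (Set.subset_iUnion A i))
  rcases mem_recSet_iff.mp hx with rfl | ⟨r, rfl, hr⟩
  · exact Set.mem_iUnion.mpr ⟨Classical.arbitrary ι, mem_recSet_iff.mpr (Or.inl rfl)⟩
  · obtain ⟨i, hi⟩ := hA.exists_mem_subset_of_finset_subset_biUnion
      (s := r.values_finite.toFinset) (by rwa [Set.Finite.coe_toFinset])
    rw [Set.Finite.coe_toFinset] at hi
    exact Set.mem_iUnion.mpr ⟨i, mem_recSet_iff.mpr (Or.inr ⟨r, rfl, hi⟩)⟩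

end RecSet

theorem Subdomain.subset {U : Type*} {le : U → U → Prop} {bot : U} {A B : Set U}
    (h : Subdomain le bot A B) : A ⊆ B :=
  h.1

theorem recSet_continuous_general {L U : Type*} (le : U → U → Prop)
    (bot : U) (Dch : ℕ → Set U)
    (hchain : ∀ i, Subdomain le bot (Dch i) (Dch (i + 1))) :
    RecSet (L := L) (⋃ i, Dch i) = ⋃ i, RecSet (L := L) (Dch i) :=
  recSet_iUnion_of_directed (monotone_nat_of_le_succ fun i => (hchain i).subset).directed_le

/-- the record domain constructor preserves least upper bounds of
chains of domains: for an increasing chain `D_i` of domains under the subdomain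
relation, `L ⊸ (⋃ i, D_i) = ⋃ i, (L ⊸ D_i)`; in particular every record function
with values in the union lies in some `L ⊸ D_i`, its finitely many values all
appearing in a single `D_i`. -/
theorem recSet_continuous {L U : Type*} (le : U → U → Prop)
    (hrefl : Reflexive le) (htrans : Transitive le) (bot : U) (Dch : ℕ → Set U)
    (hchain : ∀ i, Subdomain le bot (Dch i) (Dch (i + 1))) :
    RecSet (L := L) (⋃ i, Dch i) = ⋃ i, RecSet (L := L) (Dch i) :=
  recSet_continuous_general le bot Dch hchain
end
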